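/- Let (a,b)=(Ψ_{2^{m−2}−1}(G₁),Ψ_{2^{m−2}−1}(G₂)) and (c,d)=(Ψ_{2^{m−2}−1}(G₁+(q/2)x_{m−2}),Ψ_{2^{m−2}−1}(G₂+(q/2)x_{m−2})) as in the paper's construction. Then C(a,c)(τ)+C(b,d)(τ)=0 for every shift τ. -/

import Mathlib

open Finset Complex

/-- ω = exp(2πi/q). -/
noncomputable def omegaq (q : ℕ) : ℂ := Complex.exp (2 * Real.pi * Complex.I / q)

/-- Aperiodic cross-correlation of two length-`N` complex sequences at shift `τ`. -/
noncomputable def acorr (N : ℕ) (x y : ℕ → ℂ) (τ : ℕ) : ℂ :=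
  ∑ i ∈ Finset.range (N - τ), x i * (starRingEnd ℂ) (y (i + τ))

/-- `k`-th binary digit of `i`. -/
def bit (i k : ℕ) : ℕ := (i / 2 ^ k) % 2

/-!
On the window `[L, 2^m - L)`, `L = 2^(m-2) - 1`, reversing a sequence complements every bit of the
index. Complementing sends each bit `x_k` to `1 + x_k` and the path sum `g` to
`g + (m - 3) + x_{π 0} + x_{π (m-3)}` (mod 2), so that `signExp₂` of the complement is
`signExp₁ + x_{m-2}` (mod 2). Hence, after removing the common unimodular factor `ω^c`, `b` is the
reverse of `c` and `d` is minus the reverse of `a`, and for such real sequences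
`C(b,d) = C(c̃, -ã) = -C(a,c)`, as in Golay's construction of complementary pairs.
-/

open ComplexConjugate

theorem omegaq_pow_div_two {q : ℕ} (hq : q ≠ 0) (hq2 : 2 ∣ q) : omegaq q ^ (q / 2) = -1 := by
  have := (Complex.isPrimitiveRoot_exp q hq).pow_of_dvd (p := q / 2) (by omega)
    (Nat.div_dvd_of_dvd hq2)
  rw [Nat.div_div_self hq2 hq] at this
  exact this.eq_neg_one_of_two_right

theorem norm_omegaq {q : ℕ} (hq : q ≠ 0) : ‖omegaq q‖ = 1 :=
  (Complex.isPrimitiveRoot_exp q hq).norm'_eq_one hq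

theorem acorr_congr {N : ℕ} {x x' y y' : ℕ → ℂ} (hx : ∀ i < N, x i = x' i)
    (hy : ∀ i < N, y i = y' i) (τ : ℕ) : acorr N x y τ = acorr N x' y' τ :=
  sum_congr rfl fun i hi => by
    have := mem_range.1 hi
    rw [hx i (by omega), hy (i + τ) (by omega)]

theorem acorr_neg_left (N : ℕ) (x y : ℕ → ℂ) (τ : ℕ) :
    acorr N (fun i => -x i) y τ = -acorr N x y τ := by
  simp [acorr, sum_neg_distrib]

theorem acorr_neg_right (N : ℕ) (x y : ℕ → ℂ) (τ : ℕ) :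
    acorr N x (fun i => -y i) τ = -acorr N x y τ := by
  simp [acorr, sum_neg_distrib]

theorem acorr_const_mul_of_norm_eq_one {z : ℂ} (hz : ‖z‖ = 1) (N : ℕ) (x y : ℕ → ℂ) (τ : ℕ) :
    acorr N (fun i => z * x i) (fun i => z * y i) τ = acorr N x y τ := by
  have hzz : z * conj z = 1 := by rw [mul_conj', hz, Complex.ofReal_one, one_pow]
  refine sum_congr rfl fun i _ => ?_
  rw [map_mul]
  linear_combination x i * conj (y (i + τ)) * hzz

theorem acorr_reverse {N : ℕ} {x y : ℕ → ℂ} (hx : ∀ i, conj (x i) = x i)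
    (hy : ∀ i, conj (y i) = y i) (τ : ℕ) :
    acorr N (fun i => x (N - 1 - i)) (fun i => y (N - 1 - i)) τ = acorr N y x τ := by
  rw [acorr, ← sum_range_reflect]
  refine sum_congr rfl fun i hi => ?_
  have := mem_range.1 hi
  rw [show N - 1 - (N - τ - 1 - i) = i + τ by omega,
    show N - 1 - (N - τ - 1 - i + τ) = i by omega, hx, hy, mul_comm]

theorem acorr_add_acorr_eq_zero_of_reverse {N : ℕ} {a b c d : ℕ → ℂ}
    (ha : ∀ i, conj (a i) = a i) (hc : ∀ i, conj (c i) = c i)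
    (hb : ∀ i < N, b i = c (N - 1 - i)) (hd : ∀ i < N, d i = -a (N - 1 - i)) (τ : ℕ) :
    acorr N a c τ + acorr N b d τ = 0 ∧ acorr N c a τ + acorr N d b τ = 0 := by
  have hbd : acorr N b d τ = -acorr N a c τ := by
    rw [acorr_congr hb hd, acorr_neg_right, acorr_reverse hc ha]
  have hdb : acorr N d b τ = -acorr N c a τ := by
    rw [acorr_congr hd hb, acorr_neg_left, acorr_reverse ha hc]
  exact ⟨by rw [hbd, add_neg_cancel], by rw [hdb, add_neg_cancel]⟩

theorem bit_le_one (i k : ℕ) : bit i k ≤ 1 := Nat.le_of_lt_succ (Nat.mod_lt _ two_pos)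

theorem bit_succ (i k : ℕ) : bit i (k + 1) = bit (i / 2) k := by
  rw [bit, bit, Nat.div_div_eq_div_mul, pow_succ']

theorem bit_add_bit_of_add_eq :
    ∀ {k m u v : ℕ}, u + v = 2 ^ m - 1 → k < m → bit u k + bit v k = 1
  | 0, m + 1, u, v, huv, _ => by
    have : 1 ≤ 2 ^ m := Nat.one_le_two_pow
    rw [pow_succ] at huv
    simp only [bit, pow_zero, Nat.div_one]
    omega
  | k + 1, m + 1, u, v, huv, hk => by
    have : 1 ≤ 2 ^ m := Nat.one_le_two_pow
    rw [pow_succ] at huv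
    rw [bit_succ, bit_succ]
    exact bit_add_bit_of_add_eq (m := m) (by omega) (by omega)

theorem cast_bit_of_add_eq {k m u v : ℕ} (huv : u + v = 2 ^ m - 1) (hk : k < m) :
    (bit v k : ZMod 2) = bit u k + 1 := by
  have h : ((bit u k + bit v k : ℕ) : ZMod 2) = 1 := by
    rw [bit_add_bit_of_add_eq huv hk, Nat.cast_one]
  push_cast at h
  linear_combination h - (bit u k : ZMod 2) * CharTwo.two_eq_zero (R := ZMod 2)

theorem neg_one_pow_eq_of_cast_eq {R : Type*} [Ring R] {a b : ℕ}
    (h : (a : ZMod 2) = b) : (-1 : R) ^ a = (-1) ^ b := by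
  rw [neg_one_pow_eq_pow_mod_two, neg_one_pow_eq_pow_mod_two (n := b),
    (ZMod.natCast_eq_natCast_iff' a b 2).1 h]

theorem sum_range_add_one_mul_add_one {R : Type*} [CommRing R] [CharP R 2] (x : ℕ → R) (n : ℕ) :
    ∑ k ∈ range n, (x k + 1) * (x (k + 1) + 1)
      = ∑ k ∈ range n, x k * x (k + 1) + n + x 0 + x n := by
  induction n with
  | zero => simp [CharTwo.add_self_eq_zero]
  | succ n ih =>
    rw [sum_range_succ, sum_range_succ, ih]
    push_cast
    linear_combination x n * CharTwo.two_eq_zero (R := R)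

/-- `G₁ = (q/2)·signExp₁ + c` and `G₂ = (q/2)·signExp₂ + c`, so `ω^Gᵢ = ω^c·(-1)^signExpᵢ`. -/
def signExp₁ (m : ℕ) (π g : ℕ → ℕ) (i : ℕ) : ℕ :=
  (1 - bit i (m - 1)) * bit i (m - 2) * g i
    + bit i (m - 1) * (1 - bit i (m - 2)) * (g i + bit i (π 0) + (m - 2))
    + bit i (m - 1) * bit i (m - 2)

def signExp₂ (m : ℕ) (π g : ℕ → ℕ) (i : ℕ) : ℕ :=
  (1 - bit i (m - 1)) * bit i (m - 2) * g i
    + bit i (m - 1) * (1 - bit i (m - 2)) * (g i + bit i (π 0) + (m - 2))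
    + bit i (π (m - 3)) * (bit i (m - 1) + bit i (m - 2))

theorem signExp₂_of_add_eq {m u v : ℕ} {π g : ℕ → ℕ} (hm : 3 ≤ m) (hπ : ∀ k < m - 2, π k < m)
    (hg : ∀ i, g i = ∑ k ∈ range (m - 3), bit i (π k) * bit i (π (k + 1)))
    (huv : u + v = 2 ^ m - 1) :
    (signExp₂ m π g v : ZMod 2) = signExp₁ m π g u + bit u (m - 2) := by
  have hbit : ∀ k < m, (bit v k : ZMod 2) = bit u k + 1 := fun k hk => cast_bit_of_add_eq huv hk
  have hgv : (g v : ZMod 2) = g u + (m - 3 : ℕ) + bit u (π 0) + bit u (π (m - 3)) := by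
    rw [hg, hg]
    push_cast
    rw [sum_congr rfl fun k hk => by
      have := mem_range.1 hk
      rw [hbit _ (hπ k (by omega)), hbit _ (hπ (k + 1) (by omega))],
      sum_range_add_one_mul_add_one (fun k => (bit u (π k) : ZMod 2))]
  have hm2 : ((m - 2 : ℕ) : ZMod 2) = (m - 3 : ℕ) + 1 := by
    rw [show m - 2 = m - 3 + 1 by omega, Nat.cast_succ]
  simp only [signExp₁, signExp₂, Nat.cast_add, Nat.cast_mul, Nat.cast_sub (bit_le_one _ _),
    Nat.cast_one]
  rw [hbit (m - 1) (by omega), hbit (m - 2) (by omega), hbit (π 0) (hπ 0 (by omega)),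
    hbit (π (m - 3)) (hπ (m - 3) (by omega)), hgv, hm2]
  generalize (bit u (m - 1) : ZMod 2) = x₁
  generalize (bit u (m - 2) : ZMod 2) = x₂
  generalize (bit u (π 0) : ZMod 2) = p₀
  generalize (bit u (π (m - 3)) : ZMod 2) = p
  generalize (g u : ZMod 2) = s
  generalize ((m - 3 : ℕ) : ZMod 2) = n
  -- a Boolean identity in six variables
  revert x₁ x₂ p₀ p s n
  decide

theorem neg_one_pow_signExp₂_of_add_eq {R : Type*} [Ring R] {m u v : ℕ} {π g : ℕ → ℕ}
    (hm : 3 ≤ m) (hπ : ∀ k < m - 2, π k < m)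
    (hg : ∀ i, g i = ∑ k ∈ range (m - 3), bit i (π k) * bit i (π (k + 1)))
    (huv : u + v = 2 ^ m - 1) :
    (-1 : R) ^ signExp₂ m π g v = (-1) ^ (signExp₁ m π g u + bit u (m - 2)) :=
  neg_one_pow_eq_of_cast_eq <| by push_cast; exact signExp₂_of_add_eq hm hπ hg huv

theorem neg_one_pow_signExp₂_add_bit_of_add_eq {R : Type*} [Ring R] {m u v : ℕ} {π g : ℕ → ℕ}
    (hm : 3 ≤ m) (hπ : ∀ k < m - 2, π k < m)
    (hg : ∀ i, g i = ∑ k ∈ range (m - 3), bit i (π k) * bit i (π (k + 1)))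
    (huv : u + v = 2 ^ m - 1) :
    (-1 : R) ^ (signExp₂ m π g v + bit v (m - 2)) = -(-1) ^ signExp₁ m π g u := by
  rw [← mul_neg_one ((-1 : R) ^ _), ← pow_succ]
  refine neg_one_pow_eq_of_cast_eq ?_
  push_cast
  rw [signExp₂_of_add_eq hm hπ hg huv, cast_bit_of_add_eq huv (by omega)]
  linear_combination (bit u (m - 2) : ZMod 2) * CharTwo.two_eq_zero (R := ZMod 2)

theorem reverse_add_eq_two_pow_sub_one {m i : ℕ} (hm : 2 ≤ m) (hi : i < 2 ^ (m - 1) + 2) :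
    (2 ^ (m - 1) + 2 - 1 - i + (2 ^ (m - 2) - 1)) + (i + (2 ^ (m - 2) - 1)) = 2 ^ m - 1 := by
  have h₁ : 2 ^ m = 2 * 2 ^ (m - 1) := by rw [← pow_succ']; congr 1; omega
  have h₂ : 2 ^ (m - 1) = 2 * 2 ^ (m - 2) := by rw [← pow_succ']; congr 1; omega
  have : 1 ≤ 2 ^ (m - 2) := Nat.one_le_two_pow
  omega

/-- Lemma 4, eqn (12): C(a,c)(τ) + C(b,d)(τ) = 0 for every shift τ
(positive shifts, and the swapped version covering negative shifts). -/
theorem stmt_7 (q m c : ℕ) (hq : 2 ≤ q) (hq2 : 2 ∣ q) (hm : 4 ≤ m)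
    (π : ℕ → ℕ) (hπ : Set.BijOn π (Set.Iio (m - 2)) (Set.Iio (m - 2)))
    (g G G₁ G₂ : ℕ → ℕ)
    (hg : ∀ i, g i = ∑ k ∈ Finset.range (m - 3), bit i (π k) * bit i (π (k + 1)))
    (hG : ∀ i, G i = q / 2 * ((1 - bit i (m - 1)) * bit i (m - 2) * g i
        + bit i (m - 1) * (1 - bit i (m - 2)) * (g i + bit i (π 0) + (m - 2))) + c)
    (hG₁ : ∀ i, G₁ i = G i + q / 2 * (bit i (m - 1) * bit i (m - 2)))
    (hG₂ : ∀ i, G₂ i = G i + q / 2 * (bit i (π (m - 3)) * (bit i (m - 1) + bit i (m - 2))))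
    (a b cs ds : ℕ → ℂ)
    (ha : ∀ i, a i = omegaq q ^ G₁ (i + (2 ^ (m - 2) - 1)))
    (hb : ∀ i, b i = omegaq q ^ G₂ (i + (2 ^ (m - 2) - 1)))
    (hcs : ∀ i, cs i = omegaq q ^ (G₁ (i + (2 ^ (m - 2) - 1))
        + q / 2 * bit (i + (2 ^ (m - 2) - 1)) (m - 2)))
    (hds : ∀ i, ds i = omegaq q ^ (G₂ (i + (2 ^ (m - 2) - 1))
        + q / 2 * bit (i + (2 ^ (m - 2) - 1)) (m - 2))) :
    ∀ τ : ℕ,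
      acorr (2 ^ (m - 1) + 2) a cs τ + acorr (2 ^ (m - 1) + 2) b ds τ = 0 ∧
      acorr (2 ^ (m - 1) + 2) cs a τ + acorr (2 ^ (m - 1) + 2) ds b τ = 0 := by
  intro τ
  set L := 2 ^ (m - 2) - 1
  set z := omegaq q ^ c
  have hpow : ∀ k, omegaq q ^ (q / 2 * k + c) = z * (-1) ^ k := fun k => by
    rw [pow_add, pow_mul, omegaq_pow_div_two (by omega) hq2, mul_comm]
  have hG₁ : ∀ i, G₁ i = q / 2 * signExp₁ m π g i + c := fun i => by rw [hG₁, hG, signExp₁]; ring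
  have hG₂ : ∀ i, G₂ i = q / 2 * signExp₂ m π g i + c := fun i => by rw [hG₂, hG, signExp₂]; ring
  have ha : a = fun i => z * (-1) ^ signExp₁ m π g (i + L) :=
    funext fun i => by rw [ha, hG₁, hpow]
  have hb : b = fun i => z * (-1) ^ signExp₂ m π g (i + L) :=
    funext fun i => by rw [hb, hG₂, hpow]
  have hcs : cs = fun i => z * (-1) ^ (signExp₁ m π g (i + L) + bit (i + L) (m - 2)) :=
    funext fun i => by rw [hcs, hG₁, ← hpow]; ring_nf
  have hds : ds = fun i => z * (-1) ^ (signExp₂ m π g (i + L) + bit (i + L) (m - 2)) :=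
    funext fun i => by rw [hds, hG₂, ← hpow]; ring_nf
  have hz : ‖z‖ = 1 := by rw [norm_pow, norm_omegaq (by omega), one_pow]
  have hπ' : ∀ k < m - 2, π k < m := fun k hk => (hπ.mapsTo hk).trans_le (Nat.sub_le m 2)
  simp only [ha, hb, hcs, hds, acorr_const_mul_of_norm_eq_one hz]
  exact acorr_add_acorr_eq_zero_of_reverse (fun i => by simp) (fun i => by simp)
    (fun i hi => neg_one_pow_signExp₂_of_add_eq (by omega) hπ' hg
      (reverse_add_eq_two_pow_sub_one (by omega) hi))
    (fun i hi => neg_one_pow_signExp₂_add_bit_of_add_eq (by omega) hπ' hg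
      (reverse_add_eq_two_pow_sub_one (by omega) hi)) τ
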